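/- Let X = (M, X, ⊥) be a non-trivial concurrent system with Σ_α ≠ ∅ for every state α. If the dominant valuation f (f_α(x) = 1 iff α·x ≠ ⊥) is probabilistic, then X is deterministic, i.e., for every state α the poset of executable cliques 𝒞_α has a unique maximal element (equivalently any two enabled letters at α commute). -/

import Mathlib

open scoped Classical

section TracePre

variable {A : Type*}

/-- The elementary swap relation from an independence relation. -/
def swapRel (I : A → A → Prop) : FreeMonoid A → FreeMonoid A → Prop :=
  fun x y => ∃ a b, I a b ∧ x = FreeMonoid.of a * FreeMonoid.of b ∧
    y = FreeMonoid.of b * FreeMonoid.of a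

/-- The congruence generated by the commutations. -/
def traceCon (I : A → A → Prop) : Con (FreeMonoid A) := conGen (swapRel I)

/-- The trace monoid `M(A, I)`. -/
abbrev TraceMonoid (A : Type*) (I : A → A → Prop) := (traceCon I).Quotient

/-- Image of a letter in the trace monoid. -/
def trOf (I : A → A → Prop) (a : A) : TraceMonoid A I := (traceCon I).mk' (FreeMonoid.of a)

theorem traceCon_le_ker {M : Type*} [CommMonoid M] {I : A → A → Prop}
    (φ : FreeMonoid A →* M) : traceCon I ≤ Con.ker φ := by
  apply Con.conGen_le.2
  intro x y hxy
  obtain ⟨a, b, _, rfl, rfl⟩ := hxy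
  simp [Con.ker_rel, map_mul, mul_comm]

/-- Length of a trace. -/
noncomputable def trLen {I : A → A → Prop} (x : TraceMonoid A I) : ℕ :=
  Multiplicative.toAdd
    ((Con.lift (traceCon I) (FreeMonoid.lift fun _ => Multiplicative.ofAdd (1 : ℕ))
      (traceCon_le_ker _)) x)

/-- Number of occurrences of the letter `a` in a trace. -/
noncomputable def trCount {I : A → A → Prop} (a : A) (x : TraceMonoid A I) : ℕ :=
  Multiplicative.toAdd
    ((Con.lift (traceCon I)
      (FreeMonoid.lift fun b => Multiplicative.ofAdd (if b = a then (1 : ℕ) else 0))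
      (traceCon_le_ker _)) x)

/-- Lists of pairwise distinct, pairwise independent letters. -/
def IsCliqueList (I : A → A → Prop) (l : List A) : Prop :=
  l.Pairwise fun a b => a ≠ b ∧ I a b

/-- The trace associated with a list of letters. -/
def listProd (I : A → A → Prop) (l : List A) : TraceMonoid A I := (l.map (trOf I)).prod

/-- A clique of the trace monoid. -/
def IsClique (I : A → A → Prop) (x : TraceMonoid A I) : Prop :=
  ∃ l, IsCliqueList I l ∧ x = listProd I l

/-- The trace associated with a finite set of letters. -/
noncomputable def fprod (I : A → A → Prop) (c : Finset A) : TraceMonoid A I :=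
  listProd I c.toList

/-- Normal pairs of cliques, cliques being represented by finite sets of letters. -/
def NormalF (I : A → A → Prop) (c d : Finset A) : Prop :=
  ∀ b ∈ d, ∃ a ∈ c, (¬ I a b ∨ a = b)

/-- Greatest lower bound for left divisibility. -/
def IsGlbDvd {M : Type*} [Monoid M] (x y g : M) : Prop :=
  g ∣ x ∧ g ∣ y ∧ ∀ w, w ∣ x → w ∣ y → w ∣ g

/-- Least upper bound for left divisibility. -/
def IsLubDvd {M : Type*} [Monoid M] (x y z : M) : Prop :=
  x ∣ z ∧ y ∣ z ∧ ∀ w, x ∣ w → y ∣ w → z ∣ w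

end TracePre

section CSPre

variable {A X : Type*}

/-- A concurrent system: a right action of a trace monoid on `X ∪ {⊥}`,
`⊥` being encoded by `none`. -/
structure CS (A : Type*) (I : A → A → Prop) (X : Type*) where
  act : Option X → TraceMonoid A I → Option X
  act_one : ∀ s, act s 1 = s
  act_mul : ∀ s x y, act s (x * y) = act (act s x) y
  act_bot : ∀ x, act none x = none

variable {I : A → A → Prop}

/-- The letter `a` is enabled at state `α`. -/
def CS.Enabled (S : CS A I X) (α : X) (a : A) : Prop := S.act (some α) (trOf I a) ≠ none

/-- The set of executions starting from `α`. -/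
def CS.MSet (S : CS A I X) (α : X) : Set (TraceMonoid A I) :=
  {x | S.act (some α) x ≠ none}

/-- A deterministic concurrent system: any two letters enabled at a common state
commute. -/
def CS.Deterministic (S : CS A I X) : Prop :=
  ∀ (α : X) (a b : A), a ≠ b → S.Enabled α a → S.Enabled α b → I a b

/-- The finite set of letters enabled at an extended state. -/
noncomputable def CS.enabledFinset [Fintype A] (S : CS A I X) (s : Option X) : Finset A :=
  Finset.univ.filter fun a => S.act s (trOf I a) ≠ none

/-- A generalised execution from `α`, as an infinite normal sequence of cliques
all of whose finite prefixes are executions. -/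
def CS.IsGenExec (S : CS A I X) (α : X) (c : ℕ → Finset A) : Prop :=
  (∀ i, (↑(c i) : Set A).Pairwise I) ∧ (∀ i, NormalF I (c i) (c (i + 1))) ∧
    ∀ k, S.act (some α) (((List.range k).map fun i => fprod I (c i)).prod) ≠ none

/-- An infinite execution from `α`: a generalised execution with all cliques nonempty. -/
def CS.IsInfExec (S : CS A I X) (α : X) (c : ℕ → Finset A) : Prop :=
  S.IsGenExec α c ∧ ∀ i, c i ≠ ∅

end CSPre

/-!
By Möbius inversion on the lower set of cliques, `f_α(c) = ∑_{c' ⊇ c} h_α(c')` for every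
clique `c`. If two distinct enabled letters `a`, `b` did not commute, no clique would contain
both, so the cliques above `{a}` and those above `{b}` would be disjoint; with `h_α ≥ 0` this
gives `f_α(a) + f_α(b) ≤ f_α(ε)`, that is `2 ≤ 1`.
-/

namespace Finset

variable {α : Type*} [DecidableEq α]

theorem sum_Icc_neg_one_pow_card_sub {R : Type*} [Ring R] {s t : Finset α} (hst : s ⊆ t) :
    ∑ u ∈ Icc s t, (-1 : R) ^ (#t - #u) = if s = t then 1 else 0 := by
  have hcompl : ∑ u ∈ Icc s t, (-1 : R) ^ (#t - #u) = ∑ w ∈ (t \ s).powerset, (-1 : R) ^ #w := by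
    refine sum_nbij' (t \ ·) (t \ ·) (fun u hu => ?_) (fun w hw => ?_) (fun u hu => ?_)
      (fun w hw => ?_) (fun u hu => ?_)
    · exact mem_powerset.2 (sdiff_subset_sdiff subset_rfl (mem_Icc.1 hu).1)
    · exact mem_Icc.2 ⟨subset_sdiff.2 ⟨hst, (disjoint_of_subset_left (mem_powerset.1 hw)
        sdiff_disjoint).symm⟩, sdiff_subset⟩
    · exact sdiff_sdiff_eq_self (mem_Icc.1 hu).2
    · exact sdiff_sdiff_eq_self ((mem_powerset.1 hw).trans sdiff_subset)
    · rw [card_sdiff_of_subset (mem_Icc.1 hu).2]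
  have hcast := congrArg (Int.cast : ℤ → R) (sum_powerset_neg_one_pow_card (x := t \ s))
  push_cast at hcast
  rw [hcompl, hcast]
  exact if_congr (sdiff_eq_empty_iff_subset.trans hst.ge_iff_eq) rfl rfl

theorem moebius_inversion_of_isLowerSet {R : Type*} [Ring R] {𝒞 : Finset (Finset α)}
    (h𝒞 : IsLowerSet (𝒞 : Set (Finset α))) {F H : Finset α → R}
    (hH : ∀ c ∈ 𝒞, H c = ∑ c' ∈ 𝒞 with c ⊆ c', (-1 : R) ^ (#c' - #c) * F c')
    {c : Finset α} (hc : c ∈ 𝒞) :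
    ∑ c' ∈ 𝒞 with c ⊆ c', H c' = F c := by
  have hswap : ∀ x y, (x ∈ {c' ∈ 𝒞 | c ⊆ c'} ∧ y ∈ {c'' ∈ 𝒞 | x ⊆ c''}) ↔
      (x ∈ Icc c y ∧ y ∈ {c'' ∈ 𝒞 | c ⊆ c''}) := by
    intro x y
    simp only [mem_filter, mem_Icc]
    constructor
    · rintro ⟨⟨-, hcx⟩, hy, hxy⟩
      exact ⟨⟨hcx, hxy⟩, hy, hcx.trans hxy⟩
    · rintro ⟨⟨hcx, hxy⟩, hy, -⟩
      exact ⟨⟨h𝒞 hxy hy, hcx⟩, hy, hxy⟩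
  calc ∑ c' ∈ 𝒞 with c ⊆ c', H c'
      = ∑ c' ∈ 𝒞 with c ⊆ c', ∑ c'' ∈ 𝒞 with c' ⊆ c'', (-1 : R) ^ (#c'' - #c') * F c'' :=
        sum_congr rfl fun c' hc' => hH c' (mem_filter.1 hc').1
    _ = ∑ c'' ∈ 𝒞 with c ⊆ c'', ∑ c' ∈ Icc c c'', (-1 : R) ^ (#c'' - #c') * F c'' :=
        sum_comm' hswap
    _ = ∑ c'' ∈ 𝒞 with c ⊆ c'', if c = c'' then F c'' else 0 :=
        sum_congr rfl fun c'' hc'' => by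
          rw [← sum_mul, sum_Icc_neg_one_pow_card_sub (mem_filter.1 hc'').2, boole_mul]
    _ = F c := by simp [hc]

theorem exists_superset_of_sum_lt {M : Type*} [AddCommMonoid M] [PartialOrder M]
    [IsOrderedAddMonoid M] {𝒞 : Finset (Finset α)} {G : Finset α → M}
    (hG : ∀ c ∈ 𝒞, 0 ≤ G c) {s t : Finset α}
    (hlt : ∑ c ∈ 𝒞, G c < ∑ c ∈ 𝒞 with s ⊆ c, G c + ∑ c ∈ 𝒞 with t ⊆ c, G c) :
    ∃ c ∈ 𝒞, s ⊆ c ∧ t ⊆ c := by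
  by_contra! hst
  have hdisj : Disjoint {c ∈ 𝒞 | s ⊆ c} {c ∈ 𝒞 | t ⊆ c} :=
    disjoint_filter.2 fun c hc hsc => hst c hc hsc
  refine hlt.not_ge ?_
  rw [← sum_union hdisj, ← filter_or]
  exact sum_le_sum_of_subset_of_nonneg (filter_subset _ _) fun c hc _ => hG c hc

end Finset

section Cliques

variable {A : Type*} (I : A → A → Prop)

theorem fprod_empty : fprod I ∅ = 1 := by
  simp [fprod, listProd]

theorem fprod_singleton (a : A) : fprod I {a} = trOf I a := by
  simp [fprod, listProd]

theorem isLowerSet_filter_pairwise [Fintype A] [DecidableEq A] :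
    IsLowerSet (↑(Finset.univ.filter fun c : Finset A => (↑c : Set A).Pairwise I) :
      Set (Finset A)) := fun _ _ hdc hc => by
  simp only [Finset.coe_filter, Finset.mem_univ, true_and, Set.mem_ofPred_eq] at hc ⊢
  exact hc.mono (Finset.coe_subset.2 hdc)

end Cliques

theorem stmt14_general {A X : Type*} [Fintype A] [DecidableEq A] {I : A → A → Prop}
    (S : CS A I X)
    (f : X → TraceMonoid A I → ℝ)
    (hf : ∀ (α : X) (x : TraceMonoid A I),
      f α x = if S.act (some α) x ≠ none then 1 else 0)
    (h : X → Finset A → ℝ)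
    (hh : ∀ (α : X) (c : Finset A), h α c =
      ∑ c' ∈ Finset.univ.filter (fun c' : Finset A => (↑c' : Set A).Pairwise I ∧ c ⊆ c'),
        (-1 : ℝ) ^ (c'.card - c.card) * f α (fprod I c'))
    (hprob : ∀ α : X, h α ∅ = 0 ∧
      ∀ c : Finset A, (↑c : Set A).Pairwise I → c ≠ ∅ → 0 ≤ h α c) :
    S.Deterministic := by
  intro α a b hab ha hb
  let 𝒞 := Finset.univ.filter fun c : Finset A => (↑c : Set A).Pairwise I
  have hinv : ∀ c ∈ 𝒞, ∑ c' ∈ 𝒞 with c ⊆ c', h α c' = f α (fprod I c) :=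
    fun _ => Finset.moebius_inversion_of_isLowerSet (F := fun c => f α (fprod I c))
      (isLowerSet_filter_pairwise I) fun c _ => by rw [hh, Finset.filter_filter]
  have hnonneg : ∀ c ∈ 𝒞, 0 ≤ h α c := fun c hc => by
    obtain rfl | hc0 := eq_or_ne c ∅
    · exact (hprob α).1.ge
    · exact (hprob α).2 c (Finset.mem_filter.1 hc).2 hc0
  have hf_one : ∀ x, S.act (some α) x ≠ none → f α x = 1 := fun x hx => by rw [hf, if_pos hx]
  have hlt : ∑ c ∈ 𝒞, h α c < ∑ c ∈ 𝒞 with {a} ⊆ c, h α c + ∑ c ∈ 𝒞 with {b} ⊆ c, h α c := by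
    have htotal : ∑ c ∈ 𝒞, h α c = 1 := by
      have h0 := hinv ∅ (by simp [𝒞])
      rwa [Finset.filter_true_of_mem fun c _ => Finset.empty_subset c, fprod_empty,
        hf_one 1 (by simp [S.act_one])] at h0
    rw [htotal, hinv {a} (by simp [𝒞]), hinv {b} (by simp [𝒞]), fprod_singleton,
      fprod_singleton, hf_one _ ha, hf_one _ hb]
    norm_num
  obtain ⟨c, hc, hac, hbc⟩ := Finset.exists_superset_of_sum_lt hnonneg hlt
  exact (Finset.mem_filter.1 hc).2 (Finset.singleton_subset_iff.1 hac)
    (Finset.singleton_subset_iff.1 hbc) hab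

/-- in a non-trivial concurrent system with `Σ_α ≠ ∅` for every state,
if the dominant valuation is probabilistic (its Möbius transform `h_α` vanishes on
the empty clique and is nonnegative on nonempty cliques) then the system is
deterministic: any two distinct letters enabled at a common state commute. -/
theorem stmt14 {A X : Type*} [Fintype A] [DecidableEq A] [Fintype X] {I : A → A → Prop}
    (hsym : Symmetric I) (hirr : Irreflexive I) (S : CS A I X)
    (hnontriv : ∃ (α : X) (a : A), S.Enabled α a)
    (hne : ∀ α : X, ∃ a : A, S.Enabled α a)
    (f : X → TraceMonoid A I → ℝ)
    (hf : ∀ (α : X) (x : TraceMonoid A I),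
      f α x = if S.act (some α) x ≠ none then 1 else 0)
    (h : X → Finset A → ℝ)
    (hh : ∀ (α : X) (c : Finset A), h α c =
      ∑ c' ∈ Finset.univ.filter (fun c' : Finset A => (↑c' : Set A).Pairwise I ∧ c ⊆ c'),
        (-1 : ℝ) ^ (c'.card - c.card) * f α (fprod I c'))
    (hprob : ∀ α : X, h α ∅ = 0 ∧
      ∀ c : Finset A, (↑c : Set A).Pairwise I → c ≠ ∅ → 0 ≤ h α c) :
    S.Deterministic :=
  stmt14_general S f hf h hh hprob
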